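/- arXiv:2205.08617 — 5 statements merged into one kernel-verified Lean document; each statement's English description precedes it below -/
import Mathlib

section
/- Let φ = (1 + √5)/2 be the golden ratio. Then for every positive integer p, π = 5 · ∑_{k=0}^{∞} ( (√(3 − φ))/φ )^{4pk+1} · ∑_{i=0}^{2p−1} ( (√(3 − φ))/φ )^{2i} · (−1)^i / (4pk + 2i + 1). -/
/-!
Since `cos (π / 5) = φ / 2` and `sin (π / 5) = √(3 - φ) / 2`, the number `x = √(3 - φ) / φ` is
`tan (π / 5)`, so `π = 5 arctan x`. Grouping the Gregory series of `arctan x` into blocks of `2p`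
consecutive terms, which is allowed for an unconditionally convergent series, gives the formula;
the blocks have even length, so the sign of a term depends only on its position in its block.
-/

open Real Finset

open scoped goldenRatio

theorem HasSum.sum_range_blocks {M : Type*} [AddCommMonoid M] [TopologicalSpace M]
    [ContinuousAdd M] [T3Space M] {f : ℕ → M} {a : M} (hf : HasSum f a) {m : ℕ} (hm : m ≠ 0) :
    HasSum (fun k ↦ ∑ i ∈ range m, f (m * k + i)) a := by
  have : NeZero m := ⟨hm⟩
  have hprod : HasSum (fun q : ℕ × Fin m ↦ f (m * q.1 + q.2)) a := by
    simpa [Function.comp_def, mul_comm] using (Nat.divModEquiv m).symm.hasSum_iff.2 hf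
  refine hprod.prod_fiberwise fun k ↦ ?_
  simpa [Fin.sum_univ_eq_sum_range (fun i ↦ f (m * k + i))] using
    hasSum_fintype (fun i : Fin m ↦ f (m * k + i))

theorem Real.hasSum_arctan_blocks {x : ℝ} (hx : |x| < 1) {p : ℕ} (hp : 0 < p) :
    HasSum (fun k : ℕ ↦ x ^ (4 * p * k + 1) * ∑ i ∈ range (2 * p),
      x ^ (2 * i) * ((-1 : ℝ) ^ i / ((4 * p * k + 2 * i + 1 : ℕ) : ℝ))) (arctan x) := by
  convert (Real.hasSum_arctan hx).sum_range_blocks (m := 2 * p) (by omega) using 2 with k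
  rw [mul_sum]
  refine sum_congr rfl fun i _ ↦ ?_
  have hsign : (-1 : ℝ) ^ (2 * p * k + i) = (-1) ^ i := by
    rw [pow_add, ((even_two_mul p).mul_right k).neg_one_pow, one_mul]
  rw [hsign, show 2 * (2 * p * k + i) + 1 = 4 * p * k + 2 * i + 1 by ring,
    show 4 * p * k + 2 * i + 1 = (4 * p * k + 1) + 2 * i by ring, pow_add]
  ring

theorem Real.sin_pi_div_five : sin (π / 5) = √(3 - φ) / 2 := by
  have hsin : 0 < sin (π / 5) := sin_pos_of_pos_of_lt_pi (by positivity) (by linarith [pi_pos])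
  have hsq : sin (π / 5) ^ 2 = (√(3 - φ) / 2) ^ 2 := by
    rw [div_pow, sq_sqrt (by linarith [goldenRatio_lt_two]), sin_sq, cos_pi_div_five]
    unfold goldenRatio
    nlinarith [sq_sqrt (show (0 : ℝ) ≤ 5 by norm_num)]
  exact (pow_left_inj₀ hsin.le (by positivity) two_ne_zero).1 hsq

theorem Real.tan_pi_div_five : tan (π / 5) = √(3 - φ) / φ := by
  rw [tan_eq_sin_div_cos, sin_pi_div_five, cos_pi_div_five]
  field_simp
  ring

theorem pi_golden_bbp_general (p : ℕ) (hp : 0 < p) :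
    Real.pi = 5 * ∑' k : ℕ,
      (Real.sqrt (3 - (1 + Real.sqrt 5) / 2) / ((1 + Real.sqrt 5) / 2)) ^ (4 * p * k + 1) *
        ∑ i ∈ Finset.range (2 * p),
          (Real.sqrt (3 - (1 + Real.sqrt 5) / 2) / ((1 + Real.sqrt 5) / 2)) ^ (2 * i) *
            ((-1 : ℝ) ^ i / ((4 * p * k + 2 * i + 1 : ℕ) : ℝ)) := by
  have htan_lt : |tan (π / 5)| < 1 := by
    rw [abs_of_pos (tan_pos_of_pos_of_lt_pi_div_two (by positivity) (by linarith [pi_pos])),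
      ← tan_pi_div_four]
    exact tan_lt_tan_of_nonneg_of_lt_pi_div_two (by positivity) (by linarith [pi_pos])
      (by linarith [pi_pos])
  have harctan : arctan (tan (π / 5)) = π / 5 :=
    arctan_tan (by linarith [pi_pos]) (by linarith [pi_pos])
  change π = 5 * ∑' k : ℕ, (√(3 - φ) / φ) ^ (4 * p * k + 1) * _
  rw [← tan_pi_div_five, (hasSum_arctan_blocks htan_lt hp).tsum_eq, harctan]
  ring
end

section
/- Let φ = (1 + √5)/2 be the golden ratio. Then π = 5 · ∑_{k=0}^{∞} ( (√(3 − φ))/φ )^{4k+1} · [ 1/(4k+1) − ((3 − φ)/φ²) · 1/(4k+3) ]. -/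
open Real

theorem pi_golden_bbp_four :
    Real.pi = 5 * ∑' k : ℕ,
      (Real.sqrt (3 - (1 + Real.sqrt 5) / 2) / ((1 + Real.sqrt 5) / 2)) ^ (4 * k + 1) *
        (1 / ((4 * k + 1 : ℕ) : ℝ) -
          ((3 - (1 + Real.sqrt 5) / 2) / ((1 + Real.sqrt 5) / 2) ^ 2) *
            (1 / ((4 * k + 3 : ℕ) : ℝ))) := by
  set φ : ℝ := (1 + Real.sqrt 5) / 2 with hφdef
  have h5 : Real.sqrt 5 ^ 2 = 5 := Real.sq_sqrt (by norm_num)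
  have h5lb : (2 : ℝ) < Real.sqrt 5 := by nlinarith [Real.sqrt_nonneg 5]
  have h5ub : Real.sqrt 5 < 3 := by nlinarith [Real.sqrt_nonneg 5]
  have hφpos : 0 < φ := by rw [hφdef]; linarith
  have h3φ : (0:ℝ) ≤ 3 - φ := by rw [hφdef]; linarith
  set x : ℝ := Real.sqrt (3 - φ) / φ with hxdef
  have hxnn : 0 ≤ x := div_nonneg (Real.sqrt_nonneg _) hφpos.le
  have hsq : Real.sqrt (3 - φ) < φ := by
    rw [Real.sqrt_lt' hφpos]; rw [hφdef]; nlinarith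
  have hx1 : x < 1 := by
    rw [hxdef, div_lt_one hφpos]; exact hsq
  -- x = tan (π/5)
  have hcos : Real.cos (π / 5) = (1 + Real.sqrt 5) / 4 := Real.cos_pi_div_five
  have hsin : Real.sin (π / 5) = Real.sqrt (3 - φ) / 2 := by
    have h1 : Real.sin (π / 5) = Real.sqrt (1 - Real.cos (π / 5) ^ 2) :=
      Real.sin_eq_sqrt_one_sub_cos_sq (by positivity) (by
        have := Real.pi_pos; linarith)
    rw [h1, hcos]
    rw [show (1 : ℝ) - ((1 + Real.sqrt 5) / 4) ^ 2 = (3 - φ) * (1/2)^2 by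
      rw [hφdef]; nlinarith]
    rw [Real.sqrt_mul h3φ, Real.sqrt_sq (by norm_num)]
    ring
  have htan : Real.tan (π / 5) = x := by
    rw [Real.tan_eq_sin_div_cos, hsin, hcos, hxdef, hφdef]
    have h15 : (0:ℝ) < 1 + Real.sqrt 5 := by linarith
    field_simp
    ring
  have harctan : Real.arctan x = π / 5 := by
    rw [← htan]
    exact Real.arctan_tan (by linarith [Real.pi_pos]) (by linarith [Real.pi_pos])
  -- arctan series
  have hxnorm : ‖x‖ < 1 := by rw [Real.norm_eq_abs, abs_of_nonneg hxnn]; exact hx1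
  have hs := Real.hasSum_arctan hxnorm
  set f : ℕ → ℝ := fun n : ℕ => (-1) ^ n * x ^ (2 * n + 1) / ↑(2 * n + 1) with hfdef
  have hse : Summable fun k => f (2 * k) :=
    hs.summable.comp_injective (fun a b h => by omega)
  have hso : Summable fun k => f (2 * k + 1) :=
    hs.summable.comp_injective (fun a b h => by omega)
  have hkey : ∀ k : ℕ,
      x ^ (4 * k + 1) * (1 / ((4 * k + 1 : ℕ) : ℝ) -
        ((3 - φ) / φ ^ 2) * (1 / ((4 * k + 3 : ℕ) : ℝ))) = f (2 * k) + f (2 * k + 1) := by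
    intro k
    have hx2 : x ^ 2 = (3 - φ) / φ ^ 2 := by
      rw [hxdef, div_pow, Real.sq_sqrt h3φ]
    rw [← hx2, hfdef]
    simp only []
    rw [pow_mul, neg_one_sq, one_pow]
    rw [show (-1 : ℝ) ^ (2 * k + 1) = -1 by
      rw [pow_succ, pow_mul, neg_one_sq, one_pow, one_mul]]
    push_cast
    rw [show 2 * (2 * k) + 1 = 4 * k + 1 by ring, show 2 * (2 * k + 1) + 1 = 4 * k + 3 by ring]
    have h1 : ((4 * k + 1 : ℕ) : ℝ) ≠ 0 := by positivity
    have h3 : ((4 * k + 3 : ℕ) : ℝ) ≠ 0 := by positivity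
    push_cast at h1 h3 ⊢
    field_simp
    ring
  calc π = 5 * Real.arctan x := by rw [harctan]; ring
    _ = 5 * ∑' n, f n := by rw [hs.tsum_eq]
    _ = 5 * ∑' k, (f (2 * k) + f (2 * k + 1)) := by
        rw [Summable.tsum_add hse hso, tsum_even_add_odd hse hso]
    _ = _ := by
        congr 1
        exact (tsum_congr fun k => (hkey k)).symm
end

section
/- Let φ = (1 + √5)/2 be the golden ratio. Then π = 5 · ∑_{k=0}^{∞} ( (√(3 − φ))/φ )^{8k+1} · [ 1/(8k+1) − ((3 − φ)/φ²) · 1/(8k+3) + ((3 − φ)/φ²)² · 1/(8k+5) − ((3 − φ)/φ²)³ · 1/(8k+7) ]. -/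
open Real

private lemma bbp_group_term (x : ℝ) (k : ℕ) :
    (∑ j : Fin 4, (fun n : ℕ => (-1 : ℝ) ^ n * x ^ (2 * n + 1) / ↑(2 * n + 1))
        ((Nat.divModEquiv 4).symm (k, j)))
    = x ^ (8 * k + 1) *
        (1 / ((8 * k + 1 : ℕ) : ℝ) - x ^ 2 * (1 / ((8 * k + 3 : ℕ) : ℝ)) +
          (x ^ 2) ^ 2 * (1 / ((8 * k + 5 : ℕ) : ℝ)) -
          (x ^ 2) ^ 3 * (1 / ((8 * k + 7 : ℕ) : ℝ))) := by
  rw [Fin.sum_univ_four]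
  simp only [Nat.divModEquiv_symm_apply, Fin.val_zero, Fin.val_one, Fin.val_two,
    show ((3 : Fin 4) : ℕ) = 3 from rfl, add_zero]
  have e1 : ∀ j : ℕ, (-1 : ℝ) ^ (k * 4 + j) = (-1) ^ j := by
    intro j
    rw [pow_add, Even.neg_one_pow ⟨2 * k, by ring⟩, one_mul]
  have e0 : (-1 : ℝ) ^ (k * 4) = 1 := Even.neg_one_pow ⟨2 * k, by ring⟩
  rw [e1 1, e1 2, e1 3, e0,
    show 2 * (k * 4) + 1 = 8 * k + 1 by ring, show 2 * (k * 4 + 1) + 1 = 8 * k + 3 by ring,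
    show 2 * (k * 4 + 2) + 1 = 8 * k + 5 by ring, show 2 * (k * 4 + 3) + 1 = 8 * k + 7 by ring]
  have d1 : ((8 * k + 1 : ℕ) : ℝ) ≠ 0 := by positivity
  have d3 : ((8 * k + 3 : ℕ) : ℝ) ≠ 0 := by positivity
  have d5 : ((8 * k + 5 : ℕ) : ℝ) ≠ 0 := by positivity
  have d7 : ((8 * k + 7 : ℕ) : ℝ) ≠ 0 := by positivity
  field_simp
  ring

theorem pi_golden_bbp_eight :
    Real.pi = 5 * ∑' k : ℕ,
      (Real.sqrt (3 - (1 + Real.sqrt 5) / 2) / ((1 + Real.sqrt 5) / 2)) ^ (8 * k + 1) *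
        (1 / ((8 * k + 1 : ℕ) : ℝ) -
          ((3 - (1 + Real.sqrt 5) / 2) / ((1 + Real.sqrt 5) / 2) ^ 2) *
            (1 / ((8 * k + 3 : ℕ) : ℝ)) +
          ((3 - (1 + Real.sqrt 5) / 2) / ((1 + Real.sqrt 5) / 2) ^ 2) ^ 2 *
            (1 / ((8 * k + 5 : ℕ) : ℝ)) -
          ((3 - (1 + Real.sqrt 5) / 2) / ((1 + Real.sqrt 5) / 2) ^ 2) ^ 3 *
            (1 / ((8 * k + 7 : ℕ) : ℝ))) := by
  have hc2 : Real.sqrt 5 ^ 2 = 5 := Real.sq_sqrt (by norm_num)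
  have hclb : 2 < Real.sqrt 5 := by
    nlinarith [Real.sqrt_nonneg 5]
  have hcub : Real.sqrt 5 < 3 := by
    nlinarith [Real.sqrt_nonneg 5]
  set c := Real.sqrt 5 with hc
  set φ : ℝ := (1 + c) / 2 with hφ
  have hφpos : 0 < φ := by rw [hφ]; linarith
  have h3φ : (0:ℝ) ≤ 3 - φ := by rw [hφ]; linarith
  have hy2 : Real.sqrt (3 - φ) ^ 2 = 3 - φ := Real.sq_sqrt h3φ
  have hy0 : 0 ≤ Real.sqrt (3 - φ) := Real.sqrt_nonneg _
  set y := Real.sqrt (3 - φ) with hyy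
  set x : ℝ := y / φ with hx
  have hx0 : 0 ≤ x := div_nonneg hy0 hφpos.le
  have hx2 : x ^ 2 = (3 - φ) / φ ^ 2 := by
    rw [hx, div_pow, hy2]
  have hx2lt : x ^ 2 < 1 := by
    rw [hx2, div_lt_one (by positivity)]
    rw [hφ]; nlinarith
  have hxlt : x < 1 := by nlinarith
  -- arctan x = π / 5
  have hsin : Real.sin (π / 5) = y / 2 := by
    have h1 : Real.sin (π / 5) ^ 2 = (3 - φ) / 4 := by
      have := Real.sin_sq_add_cos_sq (π / 5)
      rw [Real.cos_pi_div_five] at this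
      rw [hφ]; nlinarith
    have h2 : (0:ℝ) < Real.sin (π / 5) := by
      apply Real.sin_pos_of_pos_of_lt_pi <;> [positivity; nlinarith [Real.pi_pos]]
    nlinarith [hy2, hy0]
  have h15 : (1 + c) ≠ 0 := by positivity
  have htan : Real.tan (π / 5) = x := by
    rw [Real.tan_eq_sin_div_cos, hsin, Real.cos_pi_div_five, hx, hφ]
    rw [← hc]
    field_simp
    ring
  have harc : Real.arctan x = π / 5 := by
    rw [← htan, Real.arctan_tan] <;> nlinarith [Real.pi_pos]
  -- series
  have hsum := Real.hasSum_arctan (x := x) (by rw [Real.norm_eq_abs, abs_of_nonneg hx0]; exact hxlt)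
  have hsum2 := ((Nat.divModEquiv 4).symm.hasSum_iff.mpr hsum)
  have hfib : ∀ k : ℕ, HasSum
      (fun j : Fin 4 => (fun n : ℕ => (-1) ^ n * x ^ (2 * n + 1) / ↑(2 * n + 1)) ((Nat.divModEquiv 4).symm (k, j)))
      (∑ j : Fin 4, (fun n : ℕ => (-1) ^ n * x ^ (2 * n + 1) / ↑(2 * n + 1)) ((Nat.divModEquiv 4).symm (k, j))) :=
    fun k => hasSum_fintype _
  have hgrp : HasSum (fun k : ℕ =>
      ∑ j : Fin 4, (fun n : ℕ => (-1) ^ n * x ^ (2 * n + 1) / ↑(2 * n + 1)) ((Nat.divModEquiv 4).symm (k, j)))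
      (Real.arctan x) := HasSum.prod_fiberwise hsum2 hfib
  rw [← hx2]
  have ht := hgrp.tsum_eq
  simp_rw [bbp_group_term x] at ht
  rw [ht, harc]
  ring
end

section
/- Let φ = (1 + √5)/2 be the golden ratio. Then for every positive integer p, π = 5 · ∑_{k=0}^{∞} ( (3 − φ)/(φ + 1) )^{2pk + 1/2} · ∑_{i=0}^{2p−1} ( (3 − φ)/(φ + 1) )^{i} · (−1)^i / (4pk + 2i + 1), where the outer exponent 2pk + 1/2 denotes a real power of the positive real number (3 − φ)/(φ + 1). -/
open Real

theorem pi_golden_bbp_rpow (p : ℕ) (hp : 0 < p) :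
    Real.pi = 5 * ∑' k : ℕ,
      ((3 - (1 + Real.sqrt 5) / 2) / ((1 + Real.sqrt 5) / 2 + 1)) ^
          ((2 * p * k : ℝ) + 1 / 2) *
        ∑ i ∈ Finset.range (2 * p),
          ((3 - (1 + Real.sqrt 5) / 2) / ((1 + Real.sqrt 5) / 2 + 1)) ^ i *
            ((-1 : ℝ) ^ i / ((4 * p * k + 2 * i + 1 : ℕ) : ℝ)) := by
  have hs5 : (Real.sqrt 5) ^ 2 = 5 := Real.sq_sqrt (by norm_num)
  have hs5pos : (2 : ℝ) < Real.sqrt 5 := by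
    nlinarith [Real.sqrt_nonneg 5]
  set r : ℝ := (3 - (1 + Real.sqrt 5) / 2) / ((1 + Real.sqrt 5) / 2 + 1) with hr
  have hr_eq : r = 5 - 2 * Real.sqrt 5 := by
    rw [hr]
    rw [div_eq_iff (by nlinarith)]
    nlinarith
  have hrpos : 0 < r := by rw [hr_eq]; nlinarith
  have hrlt : r < 1 := by rw [hr_eq]; nlinarith
  -- x = tan(π/5)
  set x : ℝ := Real.tan (π / 5) with hx
  have hcos : Real.cos (π / 5) = (1 + Real.sqrt 5) / 4 := Real.cos_pi_div_five
  have hcospos : 0 < Real.cos (π / 5) := by rw [hcos]; nlinarith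
  have hx2 : x ^ 2 = r := by
    rw [hx, Real.tan_eq_sin_div_cos, div_pow, Real.sin_sq, hcos, hr_eq]
    rw [div_eq_iff (by nlinarith)]
    nlinarith
  have hxpos : 0 < x := by
    rw [hx]
    apply Real.tan_pos_of_pos_of_lt_pi_div_two
    · positivity
    · nlinarith [Real.pi_pos]
  have hxsqrt : Real.sqrt r = x := by
    rw [← hx2, Real.sqrt_sq hxpos.le]
  have hxlt : ‖x‖ < 1 := by
    rw [Real.norm_eq_abs, abs_of_pos hxpos]
    nlinarith
  have harctan : Real.arctan x = π / 5 := by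
    rw [hx, Real.arctan_tan] <;> nlinarith [Real.pi_pos]
  have hsum := Real.hasSum_arctan hxlt
  haveI : NeZero (2 * p) := ⟨by omega⟩
  have hsum2 := (Nat.divModEquiv (2 * p)).symm.hasSum_iff.mpr hsum
  have hsum3 : HasSum (fun k : ℕ =>
      r ^ ((2 * p * k : ℝ) + 1 / 2) *
        ∑ i ∈ Finset.range (2 * p),
          r ^ i * ((-1 : ℝ) ^ i / ((4 * p * k + 2 * i + 1 : ℕ) : ℝ)))
      (Real.arctan x) := by
    refine hsum2.prod_fiberwise fun k => ?_
    have := hasSum_fintype (fun i : Fin (2 * p) =>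
      ((fun n : ℕ => (-1 : ℝ) ^ n * x ^ (2 * n + 1) / ↑(2 * n + 1)) ∘
        (Nat.divModEquiv (2 * p)).symm) (k, i))
    convert this using 1
    rw [Finset.mul_sum, ← Fin.sum_univ_eq_sum_range]
    refine Finset.sum_congr rfl fun i _ => ?_
    simp only [Function.comp, Nat.divModEquiv_symm_apply]
    have hsign : ((-1 : ℝ)) ^ (k * (2 * p) + (i : ℕ)) = (-1) ^ (i : ℕ) := by
      rw [pow_add, Even.neg_one_pow ⟨k * p, by ring⟩, one_mul]
    have hpow : x ^ (4 * p * k + 2 * (i : ℕ) + 1)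
        = r ^ (2 * p * k) * r ^ (i : ℕ) * x := by
      rw [show 4 * p * k + 2 * (i : ℕ) + 1 = 2 * (2 * p * k + (i : ℕ)) + 1 from by ring,
        pow_succ, pow_mul, hx2]; ring
    have h1 : r ^ ((2 * (p : ℝ) * (k : ℝ)) + 1 / 2) = r ^ (2 * p * k) * x := by
      rw [Real.rpow_add hrpos,
        show ((2 : ℝ) * p * k) = ((2 * p * k : ℕ) : ℝ) by push_cast; ring,
        Real.rpow_natCast, ← hxsqrt, Real.sqrt_eq_rpow]
    rw [hsign, show 2 * (k * (2 * p) + (i : ℕ)) + 1 = 4 * p * k + 2 * (i : ℕ) + 1 from by ring,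
      hpow, h1]
    ring
  have h5 : Real.arctan x = ∑' k : ℕ,
      r ^ ((2 * p * k : ℝ) + 1 / 2) *
        ∑ i ∈ Finset.range (2 * p),
          r ^ i * ((-1 : ℝ) ^ i / ((4 * p * k + 2 * i + 1 : ℕ) : ℝ)) :=
    hsum3.tsum_eq.symm
  rw [← h5, harctan]
  ring
end

section
/- Let φ = (1 + √5)/2 be the golden ratio. Then π = 5 · ∑_{k=0}^{∞} (−1)^k / (2k+1) · ( (√(3 − φ))/φ )^{2k+1}. -/
open Real

theorem pi_golden_leibniz :
    Real.pi = 5 * ∑' k : ℕ,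
      (-1 : ℝ) ^ k / ((2 * k + 1 : ℕ) : ℝ) *
        (Real.sqrt (3 - (1 + Real.sqrt 5) / 2) / ((1 + Real.sqrt 5) / 2)) ^ (2 * k + 1) := by
  have h5 : Real.sqrt 5 ^ 2 = 5 := Real.sq_sqrt (by norm_num)
  have h5nn : (0:ℝ) ≤ Real.sqrt 5 := Real.sqrt_nonneg 5
  have h5lt : Real.sqrt 5 < 5/2 := by nlinarith
  set φ : ℝ := (1 + Real.sqrt 5) / 2 with hφ
  have hφpos : 0 < φ := by positivity
  set x : ℝ := Real.sqrt (3 - φ) / φ with hxdef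
  have hxnn : 0 ≤ x := by positivity
  have hxval : x = Real.sqrt (5 - 2 * Real.sqrt 5) := by
    have h1 : (5 - 2 * Real.sqrt 5 : ℝ) = (3 - φ) / φ ^ 2 := by
      rw [hφ]; field_simp; nlinarith
    rw [h1, Real.sqrt_div (by rw [hφ]; nlinarith) _, Real.sqrt_sq hφpos.le]
  have hpi5 : (0:ℝ) < π / 5 := by positivity
  have hpi54 : π / 5 < π / 2 := by linarith [pi_pos]
  have hcos : Real.cos (π / 5) = (1 + Real.sqrt 5) / 4 := Real.cos_pi_div_five
  have hcospos : 0 < Real.cos (π / 5) := by rw [hcos]; positivity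
  have htan : Real.tan (π / 5) = x := by
    rw [hxval]
    have htnn : 0 ≤ Real.tan (π / 5) :=
      Real.tan_nonneg_of_nonneg_of_le_pi_div_two hpi5.le hpi54.le
    have hsq : Real.tan (π / 5) ^ 2 = 5 - 2 * Real.sqrt 5 := by
      rw [Real.tan_eq_sin_div_cos, div_pow]
      have hs : Real.sin (π / 5) ^ 2 = 1 - Real.cos (π / 5) ^ 2 := by
        nlinarith [Real.sin_sq_add_cos_sq (π / 5)]
      rw [hs, hcos]; field_simp; nlinarith
    rw [← hsq, Real.sqrt_sq htnn]
  have hx1 : x < 1 := by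
    rw [← htan, ← Real.tan_pi_div_four]
    exact Real.tan_lt_tan_of_nonneg_of_lt_pi_div_two hpi5.le (by linarith [pi_pos])
      (by linarith [pi_pos])
  have hsum := (Real.hasSum_arctan (x := x) (by rw [Real.norm_eq_abs, abs_of_nonneg hxnn]; exact hx1)).tsum_eq
  have harct : Real.arctan x = π / 5 := by
    rw [← htan]; exact Real.arctan_tan (by linarith [pi_pos]) hpi54
  calc π = 5 * Real.arctan x := by rw [harct]; ring
    _ = 5 * ∑' k : ℕ, (-1 : ℝ) ^ k / ((2 * k + 1 : ℕ) : ℝ) * x ^ (2 * k + 1) := by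
        rw [← hsum]; congr 1; apply tsum_congr; intro k; push_cast; ring
end
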